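/- Let f: R^d → R be μ-strongly convex with L₂-Lipschitz Hessian, and write H_x = ∇²f(x). For every symmetric W ∈ R^{d×d} and all x, y ∈ R^d: ‖W‖_{F(H_x)} ≤ (1 + (L₂/μ)‖x − y‖₂) · ‖W‖_{F(H_y)}. -/

import Mathlib

open Matrix MeasureTheory Filter
open scoped Classical

noncomputable section

/-- Vectors in `ℝ^d` with the Euclidean (2-)norm. -/
abbrev Vec (d : ℕ) := EuclideanSpace ℝ (Fin d)

/-- Matrix square root of a positive semidefinite matrix (junk value `0` otherwise). -/
noncomputable def msqrt {d : ℕ} (M : Matrix (Fin d) (Fin d) ℝ) : Matrix (Fin d) (Fin d) ℝ :=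
  if h : M.PosSemidef then
    (h.1.eigenvectorUnitary : Matrix (Fin d) (Fin d) ℝ) *
      diagonal (fun i => Real.sqrt (h.1.eigenvalues i)) *
      (star (h.1.eigenvectorUnitary : Matrix (Fin d) (Fin d) ℝ))
  else 0

/-- Frobenius norm of a square matrix. -/
noncomputable def frobNorm {d : ℕ} (M : Matrix (Fin d) (Fin d) ℝ) : ℝ :=
  Real.sqrt (Matrix.trace (Mᵀ * M))

/-- Weighted Frobenius norm `‖W‖_{F(H)} = ‖H^{1/2} W H^{1/2}‖_F`. -/
noncomputable def wFrob {d : ℕ} (H W : Matrix (Fin d) (Fin d) ℝ) : ℝ :=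
  frobNorm (msqrt H * W * msqrt H)

/-- Local norm `‖v‖_H = √⟨H v, v⟩`. -/
noncomputable def localNorm {d : ℕ} (H : Matrix (Fin d) (Fin d) ℝ) (v : Vec d) : ℝ :=
  Real.sqrt (inner ℝ (Matrix.toEuclideanLin H v) v : ℝ)

/-- `f` is self-concordant, expressed through its Hessian map `Hf`:
the Hessian is everywhere positive definite and the local norms at nearby points are
comparable. -/
def SelfConcordant {d : ℕ} (Hf : Vec d → Matrix (Fin d) (Fin d) ℝ) : Prop :=
  (∀ x, (Hf x).PosDef) ∧
  ∀ x y v : Vec d, localNorm (Hf x) (y - x) < 1 → v ≠ 0 →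
    1 - localNorm (Hf x) (y - x) ≤ localNorm (Hf y) v / localNorm (Hf x) v ∧
      localNorm (Hf y) v / localNorm (Hf x) v ≤ 1 / (1 - localNorm (Hf x) (y - x))

/-- `g` is the gradient of `f` and `Hf` is its Hessian (the derivative of the gradient). -/
def IsGradHess {d : ℕ} (f : Vec d → ℝ) (g : Vec d → Vec d)
    (Hf : Vec d → Matrix (Fin d) (Fin d) ℝ) : Prop :=
  (∀ x, HasGradientAt f (g x) x) ∧
  ∀ x, HasFDerivAt g (Matrix.toEuclideanCLM (𝕜 := ℝ) (Hf x) : Vec d →L[ℝ] Vec d) x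

/-- Smallest eigenvalue of a symmetric matrix, via the Rayleigh quotient. -/
noncomputable def lambdaMin {d : ℕ} (M : Matrix (Fin d) (Fin d) ℝ) : ℝ :=
  ⨅ v : {v : Vec d // ‖v‖ = 1}, (inner ℝ (Matrix.toEuclideanLin M v.1) v.1 : ℝ)

/-- Entrywise expectation of a random matrix. -/
noncomputable def expMat {Ω : Type*} [MeasurableSpace Ω] (μ : Measure Ω)
    {m n : ℕ} (M : Ω → Matrix (Fin m) (Fin n) ℝ) : Matrix (Fin m) (Fin n) ℝ :=
  Matrix.of fun i j => ∫ ω, M ω i j ∂μ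

/-- The projection matrix `Z = H^{1/2} S (Sᵀ H S)⁻¹ Sᵀ H^{1/2}`. -/
noncomputable def sketchProj {d τ : ℕ} (H : Matrix (Fin d) (Fin d) ℝ)
    (S : Matrix (Fin d) (Fin τ) ℝ) : Matrix (Fin d) (Fin d) ℝ :=
  msqrt H * S * (Sᵀ * H * S)⁻¹ * Sᵀ * msqrt H

/-- The (randomized) BFGS update
`BFGS(B, H, S) = G + (I - G H) B (I - H G)` with `G = S (Sᵀ H S)⁻¹ Sᵀ`. -/
noncomputable def bfgsUpdate {d τ : ℕ} (B H : Matrix (Fin d) (Fin d) ℝ)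
    (S : Matrix (Fin d) (Fin τ) ℝ) : Matrix (Fin d) (Fin d) ℝ :=
  S * (Sᵀ * H * S)⁻¹ * Sᵀ +
    (1 - S * (Sᵀ * H * S)⁻¹ * Sᵀ * H) * B * (1 - H * (S * (Sᵀ * H * S)⁻¹ * Sᵀ))

/-- Spectral (operator 2-)norm of a matrix. -/
noncomputable def opNorm2 {d : ℕ} (M : Matrix (Fin d) (Fin d) ℝ) : ℝ :=
  ‖(Matrix.toEuclideanCLM (𝕜 := ℝ) M : Vec d →L[ℝ] Vec d)‖

instance matrixMeasurableSpace {m n : Type*} : MeasurableSpace (Matrix m n ℝ) :=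
  MeasurableSpace.pi

/-- The sketching matrices `S k` are i.i.d. samples from a common distribution `D`. -/
def IIDSketch {d τ : ℕ} {Ω : Type*} [MeasurableSpace Ω] (μ : Measure Ω)
    (S : ℕ → Ω → Matrix (Fin d) (Fin τ) ℝ) : Prop :=
  (∀ k, Measurable (S k)) ∧
  ProbabilityTheory.iIndepFun (m := fun _ => matrixMeasurableSpace) S μ ∧
  ∀ k, Measure.map (S k) μ = Measure.map (S 0) μ

end

/-!
Strong convexity gives `∇²f ⪰ μ I`, so the Lipschitz bound `‖H_x - H_y‖ ≤ L₂‖x - y‖` yields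
`H_x ⪯ H_y + L₂‖x - y‖ I ⪯ c H_y` in the Loewner order, with `c = 1 + (L₂/μ)‖x - y‖`.
Since `‖W‖²_{F(H)} = tr(W H W H)` and `tr(P (c B - A)) ≥ 0` for `P ⪰ 0`, applying this
once with `P = W A W` and once with `P = W B W` turns `A ⪯ c B` into
`‖W‖²_{F(A)} ≤ c tr(W A W B) = c tr(W B W A) ≤ c² ‖W‖²_{F(B)}`.
-/

section StronglyConvex

variable {E : Type*} [NormedAddCommGroup E] [InnerProductSpace ℝ E]

theorem mul_norm_sub_sq_le_inner_of_strongConvex {f : E → ℝ} {g : E → E} {mu : ℝ}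
    (hf : ∀ x y, f x + inner ℝ (g x) (y - x) + mu / 2 * ‖y - x‖ ^ 2 ≤ f y) (x y : E) :
    mu * ‖y - x‖ ^ 2 ≤ inner ℝ (g y - g x) (y - x) := by
  have hxy := hf x y
  have hyx := hf y x
  rw [← neg_sub y x, inner_neg_right, norm_neg] at hyx
  rw [inner_sub_left]
  linarith

theorem mul_norm_sq_le_inner_of_hasFDerivAt {g : E → E} {T : E →L[ℝ] E} {mu : ℝ} {x : E}
    (hg : ∀ x y, mu * ‖y - x‖ ^ 2 ≤ inner ℝ (g y - g x) (y - x)) (hT : HasFDerivAt g T x)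
    (v : E) : mu * ‖v‖ ^ 2 ≤ inner ℝ (T v) v := by
  set φ : ℝ → ℝ := fun t => inner ℝ (g (x + t • v)) v
  have hline : HasDerivAt (fun t : ℝ => x + t • v) v 0 := by
    simpa using ((hasDerivAt_id (0 : ℝ)).smul_const v).const_add x
  have hφ : HasDerivWithinAt φ (inner ℝ (T v) v) (Set.Ioi 0) 0 := by
    have := (hT.comp_hasDerivAt_of_eq (0 : ℝ) hline (by simp)).inner ℝ (hasDerivAt_const 0 v)
    simpa using this.hasDerivWithinAt
  have hslope := (hasDerivWithinAt_iff_tendsto_slope' (s := Set.Ioi 0) (lt_irrefl 0)).1 hφ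
  refine ge_of_tendsto hslope ?_
  filter_upwards [self_mem_nhdsWithin] with t (ht : 0 < t)
  have hmono := hg x (x + t • v)
  rw [add_sub_cancel_left, norm_smul, Real.norm_of_nonneg ht.le, inner_smul_right] at hmono
  rw [slope_def_field, sub_zero, le_div_iff₀ ht]
  simp only [φ, zero_smul, add_zero, ← inner_sub_left]
  nlinarith

theorem inner_comm_of_hasFDerivAt_gradient [CompleteSpace E] {f : E → ℝ} {g : E → E}
    {T : E →L[ℝ] E} {x : E} (hg : ∀ y, HasGradientAt f (g y) y) (hT : HasFDerivAt g T x)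
    (v w : E) : inner ℝ (T v) w = inner ℝ (T w) v :=
  second_derivative_symmetric (f' := fun y => innerSL ℝ (g y)) (fun y => (hg y).hasFDerivAt)
    ((innerSL ℝ : E →L[ℝ] E →L[ℝ] ℝ).hasFDerivAt.comp x hT) v w

theorem inner_le_one_add_div_mul_inner {A B : E →L[ℝ] E} {mu t : ℝ} (hmu : 0 < mu)
    (hA : ∀ v, mu * ‖v‖ ^ 2 ≤ inner ℝ (A v) v) (hBA : ‖B - A‖ ≤ t) (v : E) :
    inner ℝ (B v) v ≤ (1 + t / mu) * inner ℝ (A v) v := by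
  have hdiff : inner ℝ ((B - A) v) v ≤ t * ‖v‖ ^ 2 :=
    calc inner ℝ ((B - A) v) v ≤ ‖(B - A) v‖ * ‖v‖ := real_inner_le_norm _ _
      _ ≤ ‖B - A‖ * ‖v‖ * ‖v‖ := by gcongr; exact (B - A).le_opNorm v
      _ ≤ t * ‖v‖ ^ 2 := by rw [mul_assoc, ← sq]; gcongr
  have hscaled : t * ‖v‖ ^ 2 ≤ t / mu * inner ℝ (A v) v := by
    rw [div_mul_eq_mul_div, le_div_iff₀ hmu, mul_right_comm, mul_assoc]
    exact mul_le_mul_of_nonneg_left (hA v) ((norm_nonneg _).trans hBA)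
  rw [_root_.sub_apply, inner_sub_left] at hdiff
  linarith

end StronglyConvex

namespace Matrix

variable {d : ℕ} {A B : Matrix (Fin d) (Fin d) ℝ}

theorem posSemidef_of_inner_toEuclideanCLM_nonneg {M : Matrix (Fin d) (Fin d) ℝ}
    (hM : M.IsHermitian)
    (h : ∀ v : EuclideanSpace ℝ (Fin d), 0 ≤ inner ℝ (toEuclideanCLM (𝕜 := ℝ) M v) v) :
    M.PosSemidef := by
  rw [← isPositive_toEuclideanLin_iff, LinearMap.isPositive_iff,
    isSymmetric_toEuclideanLin_iff, ← coe_toEuclideanCLM_eq_toEuclideanLin]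
  exact ⟨hM, h⟩

theorem posSemidef_smul_sub_of_inner_le {c : ℝ} (hA : A.IsHermitian) (hB : B.IsHermitian)
    (h : ∀ v : EuclideanSpace ℝ (Fin d), inner ℝ (toEuclideanCLM (𝕜 := ℝ) A v) v ≤
      c * inner ℝ (toEuclideanCLM (𝕜 := ℝ) B v) v) :
    (c • B - A).PosSemidef := by
  have hherm : (c • B - A).IsHermitian := (hB.smul (IsSelfAdjoint.all c)).sub hA
  refine posSemidef_of_inner_toEuclideanCLM_nonneg hherm fun v => ?_
  simpa [inner_sub_left, inner_smul_left] using h v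

end Matrix

section WeightedFrobenius

variable {d : ℕ} {A B W : Matrix (Fin d) (Fin d) ℝ}

theorem msqrt_eq_conjStarAlgAut (hA : A.PosSemidef) :
    msqrt A = Unitary.conjStarAlgAut ℝ _ hA.1.eigenvectorUnitary
      (diagonal fun i => √(hA.1.eigenvalues i)) := by
  rw [msqrt, dif_pos hA]
  rfl

theorem msqrt_mul_self (hA : A.PosSemidef) : msqrt A * msqrt A = A := by
  rw [msqrt_eq_conjStarAlgAut hA, ← map_mul, diagonal_mul_diagonal]
  conv_rhs => rw [hA.1.spectral_theorem]
  congr 2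
  ext i
  simp [Real.mul_self_sqrt (hA.eigenvalues_nonneg i)]

theorem msqrt_transpose (hA : A.PosSemidef) : (msqrt A)ᵀ = msqrt A := by
  rw [← conjTranspose_eq_transpose_of_trivial, ← star_eq_conjTranspose,
    msqrt_eq_conjStarAlgAut hA, ← map_star, star_eq_conjTranspose, diagonal_conjTranspose]
  simp

theorem Matrix.PosSemidef.trace_mul_nonneg {P Q : Matrix (Fin d) (Fin d) ℝ}
    (hP : P.PosSemidef) (hQ : Q.PosSemidef) : 0 ≤ (P * Q).trace := by
  have hconj : (msqrt P * Q * msqrt P).PosSemidef := by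
    simpa [conjTranspose_eq_transpose_of_trivial, msqrt_transpose hP] using
      hQ.conjTranspose_mul_mul_same (msqrt P)
  rw [← msqrt_mul_self hP, mul_assoc, trace_mul_comm]
  exact hconj.trace_nonneg

theorem Matrix.PosSemidef.trace_mul_le_mul {P : Matrix (Fin d) (Fin d) ℝ} {c : ℝ}
    (hP : P.PosSemidef) (hAB : (c • B - A).PosSemidef) : (P * A).trace ≤ c * (P * B).trace := by
  simpa [mul_sub, trace_sub] using hP.trace_mul_nonneg hAB

theorem wFrob_eq_sqrt_trace (hA : A.PosSemidef) (hW : W.IsSymm) :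
    wFrob A W = √(W * A * W * A).trace := by
  rw [wFrob, frobNorm]
  have hRR := msqrt_mul_self hA
  have hR := msqrt_transpose hA
  set R := msqrt A
  have hM : (R * W * R)ᵀ = R * W * R := by simp [transpose_mul, hR, hW.eq, mul_assoc]
  rw [hM, ← hRR]
  congr 1
  rw [show R * W * R * (R * W * R) = R * (W * (R * R) * W * R) by simp only [mul_assoc],
    trace_mul_comm, mul_assoc]

theorem wFrob_le_mul_of_posSemidef_smul_sub {c : ℝ} (hA : A.PosSemidef) (hB : B.PosSemidef)
    (hc : 0 ≤ c) (hAB : (c • B - A).PosSemidef) (hW : W.IsSymm) :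
    wFrob A W ≤ c * wFrob B W := by
  have hWH : Wᴴ = W := hW
  have hWAW : (W * A * W).PosSemidef := by
    simpa only [hWH] using hA.conjTranspose_mul_mul_same W
  have hWBW : (W * B * W).PosSemidef := by
    simpa only [hWH] using hB.conjTranspose_mul_mul_same W
  have hcycle : (W * A * W * B).trace = (W * B * W * A).trace := by
    rw [mul_assoc (W * A), trace_mul_comm, ← mul_assoc]
  have htrace : (W * A * W * A).trace ≤ c ^ 2 * (W * B * W * B).trace :=
    calc (W * A * W * A).trace ≤ c * (W * A * W * B).trace := hWAW.trace_mul_le_mul hAB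
      _ = c * (W * B * W * A).trace := by rw [hcycle]
      _ ≤ c * (c * (W * B * W * B).trace) := by gcongr; exact hWBW.trace_mul_le_mul hAB
      _ = c ^ 2 * (W * B * W * B).trace := by ring
  rw [wFrob_eq_sqrt_trace hA hW, wFrob_eq_sqrt_trace hB hW, ← Real.sqrt_sq hc,
    ← Real.sqrt_mul (sq_nonneg c)]
  exact Real.sqrt_le_sqrt htrace

end WeightedFrobenius

/-- **Change of metric in the weighted Frobenius norm under Lipschitz Hessian and strong
convexity.** -/
theorem wfrob_change_of_norm_strongly_convex
    {d : ℕ} (f : Vec d → ℝ) (g : Vec d → Vec d) (Hf : Vec d → Matrix (Fin d) (Fin d) ℝ)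
    (hfgH : IsGradHess f g Hf)
    (mu L2 : ℝ) (hmu : 0 < mu)
    (hstrconv : ∀ x y : Vec d, f x + (inner ℝ (g x) (y - x) : ℝ) + mu / 2 * ‖y - x‖ ^ 2 ≤ f y)
    (hliphess : ∀ x y : Vec d, opNorm2 (Hf y - Hf x) ≤ L2 * ‖y - x‖)
    (W : Matrix (Fin d) (Fin d) ℝ) (hW : W.IsSymm) :
    ∀ x y : Vec d, wFrob (Hf x) W ≤ (1 + L2 / mu * ‖x - y‖) * wFrob (Hf y) W := by
  intro x y
  obtain ⟨hg, hH⟩ := hfgH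
  have hsymm (z : Vec d) : (Hf z).IsHermitian := by
    rw [← isSymmetric_toEuclideanLin_iff, ← coe_toEuclideanCLM_eq_toEuclideanLin]
    intro v w
    rw [ContinuousLinearMap.coe_coe, inner_comm_of_hasFDerivAt_gradient hg (hH z), real_inner_comm]
  have hlow (z : Vec d) : ∀ v, mu * ‖v‖ ^ 2 ≤ inner ℝ (toEuclideanCLM (𝕜 := ℝ) (Hf z) v) v :=
    mul_norm_sq_le_inner_of_hasFDerivAt (mul_norm_sub_sq_le_inner_of_strongConvex hstrconv) (hH z)
  have hpsd (z : Vec d) : (Hf z).PosSemidef :=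
    posSemidef_of_inner_toEuclideanCLM_nonneg (hsymm z) fun v =>
      (mul_nonneg hmu.le (sq_nonneg _)).trans (hlow z v)
  have hdist :
      ‖toEuclideanCLM (𝕜 := ℝ) (Hf x) - toEuclideanCLM (𝕜 := ℝ) (Hf y)‖ ≤ L2 * ‖x - y‖ := by
    simpa [opNorm2] using hliphess y x
  have hc : 0 ≤ 1 + L2 / mu * ‖x - y‖ := by
    have := (norm_nonneg _).trans hdist
    rw [div_mul_eq_mul_div]
    positivity
  refine wFrob_le_mul_of_posSemidef_smul_sub (hpsd x) (hpsd y) hc ?_ hW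
  refine posSemidef_smul_sub_of_inner_le (hsymm x) (hsymm y) fun v => ?_
  rw [div_mul_eq_mul_div]
  exact inner_le_one_add_div_mul_inner hmu (hlow y) hdist v
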